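/- arXiv:0806.0103 — 2 statements merged into one kernel-verified Lean document; each statement's English description precedes it below -/
import Mathlib

section
/- Let A be a graph (signature {E}) and let A' be the ternary-signature structure on universe A ⊔ {t} defined by A' ⊨ R(a,c,b) iff a ≠ b, c ∈ {a,b}, and (A ⊨ E(a,b) or a = t). Then ucw(A') ≥ pw(G_{A'}) + 1; equivalently, if ucw(A') ≤ k then pw(G_A) ≤ k − 2. -/
/-!
Follow a construction of `A'` in `UCW_k` backwards through its subterms `B`, each of which maps
injectively into `A'`. An element of `B` is live if some tuple of `A'` with it in the middle is
not yet present in `B`. That tuple has to be added by a later introduction, which adds every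
tuple of the chosen colours; as the tuples of `A'` all have the shape `(a, a, b)` or `(a, b, b)`
with `a ≠ b`, the live element is then alone in its colour. Hence the frontier, `t` together with
the live elements, has at most `k` elements, and by induction on the construction every subterm
has a path decomposition into bags of at most `k` elements whose last bag contains the frontier:
in a disjoint union `X ⊔ Y` with `t ∈ X` every element of `Y` is live, so the frontier is appended
as a new bag; an introduction only joins elements that already share a bag (this uses the
symmetry of `E`). In `A'` itself nothing is live, so `pw (G_{A'}) ≤ k - 1`.
-/

/-- A relational signature: a type of relation symbols with arities. -/
structure Signature where
  symbols : Type
  ar : symbols → ℕ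

/-- A coloured σ-structure: a carrier, interpretations of the relation
symbols, and a colouring of the elements by natural numbers. -/
structure CStruc (σ : Signature) where
  carrier : Type
  rel : ∀ R : σ.symbols, (Fin (σ.ar R) → carrier) → Prop
  col : carrier → ℕ

/-- Isomorphism of coloured structures. -/
structure CIso {σ : Signature} (A B : CStruc σ) where
  toEquiv : A.carrier ≃ B.carrier
  rel_iff : ∀ (R : σ.symbols) (t : Fin (σ.ar R) → A.carrier),
    A.rel R t ↔ B.rel R fun i => toEquiv (t i)
  col_eq : ∀ a, B.col (toEquiv a) = A.col a

/-- Disjoint union of coloured structures. -/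
def CStruc.union {σ : Signature} (A B : CStruc σ) : CStruc σ where
  carrier := A.carrier ⊕ B.carrier
  rel R t := (∃ s, (∀ i, t i = Sum.inl (s i)) ∧ A.rel R s) ∨
             (∃ s, (∀ i, t i = Sum.inr (s i)) ∧ B.rel R s)
  col := Sum.elim A.col B.col

/-- Recolouring of a coloured structure. -/
def CStruc.recolor {σ : Signature} (A : CStruc σ) (f : ℕ → ℕ) : CStruc σ where
  carrier := A.carrier
  rel := A.rel
  col := f ∘ A.col

/-- Introduce into the relation `R` all tuples whose colours match `c`. -/
def CStruc.introduce {σ : Signature} (A : CStruc σ) (R : σ.symbols)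
    (c : Fin (σ.ar R) → ℕ) : CStruc σ where
  carrier := A.carrier
  rel S t := A.rel S t ∨ ∃ h : S = R, ∀ i : Fin (σ.ar R),
    A.col (t (Fin.cast (congrArg σ.ar h).symm i)) = c i
  col := A.col

/-- The class UCW_k[σ]: coloured structures of unary clique-width at most `k`,
generated from empty structures and relation-free singletons of colour 0 by
disjoint union, recolouring (by functions on the colours `< k`), and
introduction of a relation along a tuple of colours, closed under isomorphism. -/
inductive UCW (σ : Signature) (k : ℕ) : CStruc σ → Prop where
  | empty (A : CStruc σ) (h : IsEmpty A.carrier) : UCW σ k A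
  | single (hk : 0 < k) (A : CStruc σ) (hsub : ∀ a b : A.carrier, a = b)
      (hne : Nonempty A.carrier)
      (hrel : ∀ (R : σ.symbols) (t : Fin (σ.ar R) → A.carrier), ¬ A.rel R t)
      (hcol : ∀ a, A.col a = 0) : UCW σ k A
  | union {A B : CStruc σ} : UCW σ k A → UCW σ k B → UCW σ k (A.union B)
  | recolor {A : CStruc σ} (f : ℕ → ℕ) (hf : ∀ i, i < k → f i < k) :
      UCW σ k A → UCW σ k (A.recolor f)
  | introduce {A : CStruc σ} (R : σ.symbols) (c : Fin (σ.ar R) → ℕ)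
      (hc : ∀ i, c i < k) : UCW σ k A → UCW σ k (A.introduce R c)
  | iso {A B : CStruc σ} (e : CIso A B) : UCW σ k A → UCW σ k B

/-- Unary clique-width: the least `k` such that the structure is in UCW_k[σ]. -/
noncomputable def ucw {σ : Signature} (A : CStruc σ) : ℕ := sInf {k | UCW σ k A}

/-- The Gaifman graph of a structure: distinct elements are adjacent iff they
occur together in some tuple of some relation. -/
def CStruc.gaifman {σ : Signature} (A : CStruc σ) : SimpleGraph A.carrier where
  Adj a b := a ≠ b ∧ ∃ (R : σ.symbols) (u : Fin (σ.ar R) → A.carrier),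
    A.rel R u ∧ (∃ i, u i = a) ∧ (∃ j, u j = b)
  symm := by
    constructor
    rintro a b ⟨hne, R, u, hu, hi, hj⟩
    exact ⟨hne.symm, R, u, hu, hj, hi⟩
  loopless := by constructor; rintro a ⟨hne, -⟩; exact hne rfl

/-- A path decomposition of `G` with `n` bags. -/
structure PathDecomp {V : Type} (G : SimpleGraph V) (n : ℕ) where
  bag : Fin n → Set V
  mem_bag : ∀ v, ∃ i, v ∈ bag i
  mem_edge : ∀ u v, G.Adj u v → ∃ i, u ∈ bag i ∧ v ∈ bag i
  interval : ∀ (v : V) (i j m : Fin n), i ≤ m → m ≤ j →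
    v ∈ bag i → v ∈ bag j → v ∈ bag m

/-- `G` has path-width at most `w`. -/
def pwLe {V : Type} (G : SimpleGraph V) (w : ℕ) : Prop :=
  ∃ n, ∃ P : PathDecomp G n, ∀ i, (P.bag i).ncard ≤ w + 1

/-- The path-width of `G`. -/
noncomputable def pw {V : Type} (G : SimpleGraph V) : ℕ := sInf {w | pwLe G w}

/-- The signature of graphs: one binary relation symbol `E`. -/
abbrev sigGraph : Signature := ⟨Unit, fun _ => 2⟩
/-- A signature with a single ternary relation symbol `R`. -/
abbrev sigTernary : Signature := ⟨Unit, fun _ => 3⟩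

/-- The structure `A'` of the paper: universe `A ⊔ {t}` (with `t = Sum.inr ()`),
and `R a c b` iff `a ≠ b`, `c ∈ {a, b}`, and (`E a b` holds in `A` or `a = t`). -/
def prime (A : CStruc sigGraph) : CStruc sigTernary where
  carrier := A.carrier ⊕ Unit
  rel := fun _ u => u 0 ≠ u 2 ∧ (u 1 = u 0 ∨ u 1 = u 2) ∧
    ((∃ a b : A.carrier, u 0 = Sum.inl a ∧ u 2 = Sum.inl b ∧ A.rel () ![a, b]) ∨
      u 0 = Sum.inr ())
  col := fun _ => 0

open Function Set Sum

namespace CStruc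

variable {σ : Signature}

/-- Colour `0` is left free for the fresh singleton added in each step of the construction. -/
def discrete (σ : Signature) (n : ℕ) : CStruc σ where
  carrier := Fin n
  rel _ _ := False
  col i := i + 1

def withRels (V : Type) (T : Set (Σ R : σ.symbols, Fin (σ.ar R) → V)) (col : V → ℕ) :
    CStruc σ where
  carrier := V
  rel R t := ⟨R, t⟩ ∈ T
  col := col

def IsIsolated (B : CStruc σ) (x : B.carrier) : Prop :=
  ∀ y, B.col y = B.col x → y = x

theorem introduce_rel_of_col {B : CStruc σ} {R : σ.symbols} {c : Fin (σ.ar R) → ℕ}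
    {t : Fin (σ.ar R) → B.carrier} (ht : ∀ i, B.col (t i) = c i) : (B.introduce R c).rel R t :=
  Or.inr ⟨rfl, ht⟩

theorem introduce_rel_iff {B : CStruc σ} {R : σ.symbols} {c : Fin (σ.ar R) → ℕ}
    {t : Fin (σ.ar R) → B.carrier} :
    (B.introduce R c).rel R t ↔ B.rel R t ∨ ∀ i, B.col (t i) = c i := by
  simp [introduce]

end CStruc

namespace UCW

variable {σ : Signature} {k : ℕ}

theorem col_lt {B : CStruc σ} (h : UCW σ k B) (a : B.carrier) : B.col a < k := by
  induction h with
  | empty _ h => exact (h.false a).elim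
  | single hk _ _ _ _ hcol => exact (hcol a) ▸ hk
  | union _ _ ihA ihB => cases a; exacts [ihA _, ihB _]
  | recolor f hf _ ih => exact hf _ (ih a)
  | introduce _ _ _ _ ih => exact ih a
  | iso e _ ih => rw [← e.toEquiv.apply_symm_apply a, e.col_eq]; exact ih _

theorem discrete {n : ℕ} (hn : n < k) : UCW σ k (CStruc.discrete σ n) := by
  induction n with
  | zero => exact .empty _ (inferInstanceAs (IsEmpty (Fin 0)))
  | succ m ih =>
    have hsingle : UCW σ k ⟨Fin 1, fun _ _ => False, fun _ => 0⟩ :=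
      .single (by omega) _ (fun _ _ => Subsingleton.elim _ _) ⟨0⟩ (fun _ _ h => h)
        (fun _ => rfl)
    have hrecolor : ∀ i < k, (fun j => if j = 0 then m + 1 else j) i < k := by
      intro i hi; dsimp only; split <;> omega
    refine .iso ⟨(finSumFinEquiv : Fin m ⊕ Fin 1 ≃ Fin (m + 1)), fun R t => ?_, ?_⟩
      (.recolor _ hrecolor (.union (ih (by omega)) hsingle))
    · simp [CStruc.recolor, CStruc.union, CStruc.discrete]
    · rintro (i | i)
      · change Fin m at i
        show ((finSumFinEquiv (inl i : Fin m ⊕ Fin 1)) : ℕ) + 1 =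
          if (i : ℕ) + 1 = 0 then m + 1 else i + 1
        simp
      · change Fin 1 at i
        show ((finSumFinEquiv (inr i : Fin m ⊕ Fin 1)) : ℕ) + 1 = if 0 = 0 then m + 1 else 0
        simp [Fin.fin_one_eq_zero i]

theorem withRels {V : Type} {col : V → ℕ} (hcol : Injective col) (hlt : ∀ v, col v < k)
    {T : Set (Σ R : σ.symbols, Fin (σ.ar R) → V)} (hT : T.Finite)
    (h₀ : UCW σ k (CStruc.withRels V ∅ col)) : UCW σ k (CStruc.withRels V T col) := by
  induction T, hT using Set.Finite.induction_on with
  | empty => exact h₀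
  | @insert u T _ _ ih =>
    obtain ⟨R, u⟩ := u
    have hrel : ∀ S (t : Fin (σ.ar S) → V),
        ((CStruc.withRels V T col).introduce R (col ∘ u)).rel S t ↔
          (CStruc.withRels V (insert ⟨R, u⟩ T) col).rel S t := by
      -- `col` is injective, so the only tuple of colour `col ∘ u` is `u` itself
      simp only [CStruc.introduce, CStruc.withRels, mem_insert_iff, Sigma.mk.inj_iff, comp_apply]
      rintro S t
      constructor
      · rintro (h | ⟨rfl, h⟩)
        · exact .inr h
        · exact .inl ⟨rfl, heq_of_eq (funext fun i => hcol (h i))⟩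
      · rintro (⟨rfl, h⟩ | h)
        · exact .inr ⟨rfl, fun i => by rw [eq_of_heq h]; rfl⟩
        · exact .inl h
    exact .iso ⟨Equiv.refl V, hrel, fun _ => rfl⟩ (.introduce R (col ∘ u) (fun _ => hlt _) ih)

theorem exists_of_finite [Finite σ.symbols] (B : CStruc σ) [Finite B.carrier] :
    ∃ k, UCW σ k B := by
  classical
  obtain ⟨n, ⟨e⟩⟩ := Finite.exists_equiv_fin B.carrier
  obtain ⟨M, hM⟩ := (Set.finite_range B.col).bddAbove
  have hM' : ∀ v, B.col v ≤ M := fun v => hM ⟨v, rfl⟩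
  let col : B.carrier → ℕ := fun v => e v + 1
  have hcol : Injective col := fun v w h => e.injective (Fin.ext (by simpa [col] using h))
  have hlt : ∀ v, col v < n + M + 1 := fun v => by have := (e v).isLt; simp only [col]; omega
  have h₀ : UCW σ (n + M + 1) (CStruc.withRels B.carrier ∅ col) :=
    .iso ⟨e.symm, fun _ _ => by simp [CStruc.discrete, CStruc.withRels], fun (i : Fin n) => by
      change (e (e.symm i) : ℕ) + 1 = i + 1
      rw [e.apply_symm_apply]⟩ (discrete (by omega))
  have hrels := withRels hcol hlt (Set.toFinite {p | B.rel p.1 p.2}) h₀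
  have hrecolor : ∀ i < n + M + 1, extend col B.col 0 i < n + M + 1 := by
    intro i _
    rw [extend_def]
    split
    · exact (hM' _).trans_lt (by omega)
    · simp
  have hB : UCW σ (n + M + 1) ((CStruc.withRels B.carrier {p | B.rel p.1 p.2} col).recolor
      (extend col B.col 0)) := .recolor _ hrecolor hrels
  refine ⟨_, .iso ?_ hB⟩
  exact ⟨Equiv.refl _, fun _ _ => Iff.rfl, fun v => (hcol.extend_apply B.col 0 v).symm⟩

end UCW

theorem Set.ncard_le_of_injOn_lt {α : Type} {S : Set α} {f : α → ℕ} {k : ℕ}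
    (hf : ∀ a ∈ S, f a < k) (hinj : InjOn f S) : S.ncard ≤ k := by
  simpa using ncard_le_ncard_of_injOn f (t := (Finset.range k : Set ℕ)) (by simpa using hf) hinj

section PathDecomposition

variable {V W : Type} {G : SimpleGraph V} {H : SimpleGraph W} {k : ℕ}

def HasPathDecompEndingIn (G : SimpleGraph V) (k : ℕ) (F : Set V) : Prop :=
  ∃ n, ∃ P : PathDecomp G (n + 1), (∀ i, (P.bag i).ncard ≤ k) ∧ F ⊆ P.bag (Fin.last n)

theorem interval_snoc {n : ℕ} {B : Fin (n + 1) → Set V} {F : Set V}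
    (hB : ∀ v i j m, i ≤ m → m ≤ j → v ∈ B i → v ∈ B j → v ∈ B m)
    (hF : ∀ v ∈ F, ∀ i, v ∈ B i → v ∈ B (Fin.last n)) (v : V) (i j m : Fin (n + 2))
    (him : i ≤ m) (hmj : m ≤ j) (hi : v ∈ Fin.snoc (α := fun _ => Set V) B F i)
    (hj : v ∈ Fin.snoc (α := fun _ => Set V) B F j) :
    v ∈ Fin.snoc (α := fun _ => Set V) B F m := by
  induction m using Fin.lastCases with
  | last => rwa [Fin.last_le_iff.mp hmj] at hj
  | cast m =>
    induction i using Fin.lastCases with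
    | last => exact absurd him (Fin.castSucc_lt_last m).not_ge
    | cast i =>
      simp only [Fin.snoc_castSucc, Fin.castSucc_le_castSucc_iff] at hi him ⊢
      induction j using Fin.lastCases with
      | last =>
        rw [Fin.snoc_last] at hj
        exact hB v i _ m him (Fin.le_last m) hi (hF v hj i hi)
      | cast j =>
        simp only [Fin.snoc_castSucc, Fin.castSucc_le_castSucc_iff] at hj hmj
        exact hB v i j m him hmj hi hj

def PathDecomp.map {n : ℕ} (P : PathDecomp G n) (φ : G ≃g H) : PathDecomp H n where
  bag i := φ.symm ⁻¹' P.bag i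
  mem_bag w := P.mem_bag (φ.symm w)
  mem_edge _ _ h := P.mem_edge _ _ (φ.symm.map_adj_iff.mpr h)
  interval w := P.interval (φ.symm w)

def PathDecomp.snocMap {n : ℕ} (P : PathDecomp G (n + 1)) (φ : V ↪ W) (F : Set W)
    (hF : ∀ v, φ v ∈ F → v ∈ P.bag (Fin.last n)) (hcover : ∀ w, w ∉ range φ → w ∈ F)
    (hadj : ∀ u w, H.Adj u w → (∃ x y, G.Adj x y ∧ φ x = u ∧ φ y = w) ∨ (u ∈ F ∧ w ∈ F)) :
    PathDecomp H (n + 2) where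
  bag := Fin.snoc (α := fun _ => Set W) (fun i => φ '' P.bag i) F
  mem_bag w := by
    by_cases hw : w ∈ range φ
    · obtain ⟨v, rfl⟩ := hw
      obtain ⟨i, hi⟩ := P.mem_bag v
      exact ⟨i.castSucc, by simpa [φ.injective.mem_set_image] using hi⟩
    · exact ⟨Fin.last _, by simpa using hcover w hw⟩
  mem_edge u w h := by
    rcases hadj u w h with ⟨x, y, hxy, rfl, rfl⟩ | huw
    · obtain ⟨i, hx, hy⟩ := P.mem_edge x y hxy
      exact ⟨i.castSucc, by simpa [φ.injective.mem_set_image] using ⟨hx, hy⟩⟩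
    · exact ⟨Fin.last _, by simpa using huw⟩
  interval := by
    refine interval_snoc ?_ ?_
    · rintro _ i j m him hmj ⟨v, hi, rfl⟩ hj
      rw [φ.injective.mem_set_image] at hj ⊢
      exact P.interval v i j m him hmj hi hj
    · rintro _ hF' i ⟨v, -, rfl⟩
      exact ⟨v, hF v hF', rfl⟩

section snocMap

variable {n : ℕ} (P : PathDecomp G (n + 1)) (φ : V ↪ W) (F : Set W)
  (hF : ∀ v, φ v ∈ F → v ∈ P.bag (Fin.last n)) (hcover : ∀ w, w ∉ range φ → w ∈ F)
  (hadj : ∀ u w, H.Adj u w → (∃ x y, G.Adj x y ∧ φ x = u ∧ φ y = w) ∨ (u ∈ F ∧ w ∈ F))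

theorem PathDecomp.snocMap_bag_castSucc (i : Fin (n + 1)) :
    (P.snocMap φ F hF hcover hadj).bag i.castSucc = φ '' P.bag i := by
  simp [PathDecomp.snocMap]

theorem PathDecomp.snocMap_bag_last :
    (P.snocMap φ F hF hcover hadj).bag (Fin.last (n + 1)) = F := by
  simp [PathDecomp.snocMap]

end snocMap

theorem hasPathDecompEndingIn_of_ncard_le (hV : (univ : Set V).ncard ≤ k) (F : Set V) :
    HasPathDecompEndingIn G k F :=
  ⟨0, ⟨fun _ => univ, fun _ => ⟨0, trivial⟩, fun _ _ _ => ⟨0, trivial, trivial⟩,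
    fun _ _ _ _ _ _ _ _ => trivial⟩, fun _ => hV, subset_univ F⟩

theorem HasPathDecompEndingIn.map {F : Set W} (φ : G ≃g H)
    (h : HasPathDecompEndingIn G k (φ ⁻¹' F)) : HasPathDecompEndingIn H k F := by
  obtain ⟨n, P, hsize, hF⟩ := h
  refine ⟨n, P.map φ, fun i => ?_, fun w hw => hF (by simpa using hw)⟩
  rw [PathDecomp.map, ncard_preimage_of_injective_subset_range φ.symm.injective
    (by simp [φ.symm.surjective.range_eq])]
  exact hsize i

theorem HasPathDecompEndingIn.pw_lt {F : Set V} (h : HasPathDecompEndingIn G k F) (hk : 0 < k) :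
    pw G < k := by
  obtain ⟨n, P, hsize, -⟩ := h
  have : pwLe G (k - 1) := ⟨n + 1, P, fun i => (hsize i).trans (by omega)⟩
  exact (Nat.sInf_le this).trans_lt (by omega)

end PathDecomposition

namespace CStruc

variable {σ : Signature}

theorem union_gaifman_adj {X Y : CStruc σ} {u v : (X.union Y).carrier}
    (h : (X.union Y).gaifman.Adj u v) :
    (∃ x y, X.gaifman.Adj x y ∧ inl x = u ∧ inl y = v) ∨ (∃ y y', u = inr y ∧ v = inr y') := by
  obtain ⟨hne, R, w, ⟨s, hs, hr⟩ | ⟨s, hs, hr⟩, ⟨i, rfl⟩, ⟨j, rfl⟩⟩ := h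
  · refine .inl ⟨s i, s j, ⟨fun h => hne ?_, R, s, hr, ⟨i, rfl⟩, ⟨j, rfl⟩⟩,
      (hs i).symm, (hs j).symm⟩
    rw [hs i, hs j, h]
  · exact .inr ⟨s i, s j, hs i, hs j⟩

theorem introduce_gaifman_adj {B : CStruc σ} {R : σ.symbols} {c : Fin (σ.ar R) → ℕ}
    {u v : B.carrier} (h : (B.introduce R c).gaifman.Adj u v) :
    B.gaifman.Adj u v ∨
      ∃ w : Fin (σ.ar R) → B.carrier, (∀ i, B.col (w i) = c i) ∧ (∃ i, w i = u) ∧ ∃ j, w j = v := by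
  obtain ⟨hne, S, w, hr | ⟨rfl, hw⟩, hi, hj⟩ := h
  · exact .inl ⟨hne, S, w, hr, hi, hj⟩
  · exact .inr ⟨w, hw, hi, hj⟩

end CStruc

namespace CIso

variable {σ : Signature} {B B' : CStruc σ}

def symm (φ : CIso B B') : CIso B' B where
  toEquiv := φ.toEquiv.symm
  rel_iff R t := by simpa [comp_def] using (φ.rel_iff R (φ.toEquiv.symm ∘ t)).symm
  col_eq a := by simpa using (φ.col_eq (φ.toEquiv.symm a)).symm

theorem gaifman_adj (φ : CIso B B') {a b : B.carrier} (h : B.gaifman.Adj a b) :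
    B'.gaifman.Adj (φ.toEquiv a) (φ.toEquiv b) := by
  obtain ⟨hne, R, u, hu, ⟨i, rfl⟩, ⟨j, rfl⟩⟩ := h
  exact ⟨φ.toEquiv.injective.ne hne, R, φ.toEquiv ∘ u, (φ.rel_iff R u).mp hu, ⟨i, rfl⟩, ⟨j, rfl⟩⟩

theorem injOn_col_preimage (φ : CIso B B') {F : Set B'.carrier} (h : InjOn B'.col F) :
    InjOn B.col (φ.toEquiv ⁻¹' F) :=
  fun x hx y hy hxy => φ.toEquiv.injective (h hx hy (by rw [φ.col_eq, φ.col_eq, hxy]))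

def gaifmanIso (φ : CIso B B') : B.gaifman ≃g B'.gaifman where
  toEquiv := φ.toEquiv
  map_rel_iff' := ⟨fun h => by simpa [symm] using φ.symm.gaifman_adj h, φ.gaifman_adj⟩

def unionComm (X Y : CStruc σ) : CIso (Y.union X) (X.union Y) where
  toEquiv := Equiv.sumComm _ _
  rel_iff R t := by
    change Fin _ → Y.carrier ⊕ X.carrier at t
    have hl : ∀ i (x : X.carrier), Equiv.sumComm _ _ (t i) = inl x ↔ t i = inr x := by
      intro i x; cases t i <;> simp [Equiv.sumComm]
    have hr : ∀ i (y : Y.carrier), Equiv.sumComm _ _ (t i) = inr y ↔ t i = inl y := by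
      intro i y; cases t i <;> simp [Equiv.sumComm]
    constructor
    · rintro (⟨s, hs, h⟩ | ⟨s, hs, h⟩)
      exacts [.inr ⟨s, fun i => (hr i _).mpr (hs i), h⟩, .inl ⟨s, fun i => (hl i _).mpr (hs i), h⟩]
    · rintro (⟨s, hs, h⟩ | ⟨s, hs, h⟩)
      exacts [.inr ⟨s, fun i => (hl i _).mp (hs i), h⟩, .inl ⟨s, fun i => (hr i _).mp (hs i), h⟩]
  col_eq := by rintro (y | x) <;> rfl

end CIso

structure InjHom {σ : Signature} (B C : CStruc σ) where
  toFun : B.carrier → C.carrier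
  injective : Injective toFun
  map_rel : ∀ R t, B.rel R t → C.rel R (toFun ∘ t)

namespace InjHom

section General

variable {σ : Signature} {B B' C X Y : CStruc σ}

instance : CoeFun (InjHom B C) (fun _ => B.carrier → C.carrier) := ⟨toFun⟩

protected def id (B : CStruc σ) : InjHom B B := ⟨id, injective_id, fun _ _ h => h⟩

def compIso (f : InjHom B' C) (φ : CIso B B') : InjHom B C where
  toFun := f ∘ φ.toEquiv
  injective := f.injective.comp φ.toEquiv.injective
  map_rel R t h := f.map_rel R _ ((φ.rel_iff R t).mp h)

def unionLeft (f : InjHom (X.union Y) C) : InjHom X C where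
  toFun := f ∘ inl
  injective := f.injective.comp inl_injective
  map_rel R t h := f.map_rel R (inl ∘ t) (.inl ⟨t, fun _ => rfl, h⟩)

def ofIntroduce {R : σ.symbols} {c : Fin (σ.ar R) → ℕ} (f : InjHom (B.introduce R c) C) :
    InjHom B C where
  toFun := f
  injective := f.injective
  map_rel S t h := f.map_rel S t (.inl h)

def ofRecolor {g : ℕ → ℕ} (f : InjHom (B.recolor g) C) : InjHom B C :=
  ⟨f.toFun, f.injective, f.map_rel⟩

end General

variable {B B' C X Y : CStruc sigTernary}

def Realises (f : InjHom B C) (u : Fin 3 → C.carrier) : Prop :=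
  ∃ w, B.rel () w ∧ f ∘ w = u

/-- In a construction of `C` passing through `B`, the missing tuple still has to be introduced
at a later stage. -/
def Live (f : InjHom B C) (x : B.carrier) : Prop :=
  ∃ u, C.rel () u ∧ u 1 = f x ∧ ¬ f.Realises u

def frontier (f : InjHom B C) (p : C.carrier) : Set B.carrier :=
  {x | f x = p ∨ f.Live x}

theorem frontier_id (p : C.carrier) : (InjHom.id C).frontier p = {p} := by
  ext x
  refine ⟨?_, .inl⟩
  rintro (h | ⟨u, hu, -, hnot⟩)
  exacts [h, (hnot ⟨u, hu, rfl⟩).elim]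

theorem realises_compIso (f : InjHom B' C) (φ : CIso B B') {u : Fin 3 → C.carrier} :
    (f.compIso φ).Realises u ↔ f.Realises u := by
  constructor
  · rintro ⟨w, hw, rfl⟩
    exact ⟨φ.toEquiv ∘ w, (φ.rel_iff () w).mp hw, rfl⟩
  · rintro ⟨w, hw, rfl⟩
    exact ⟨φ.toEquiv.symm ∘ w, (φ.symm.rel_iff () w).mp hw, by ext; simp [compIso]⟩

theorem frontier_compIso (f : InjHom B' C) (φ : CIso B B') (p : C.carrier) :
    (f.compIso φ).frontier p = φ.toEquiv ⁻¹' f.frontier p := by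
  ext x
  simp only [frontier, Live, realises_compIso]
  rfl

theorem hasPathDecompEndingIn_of_compIso {k : ℕ} {p : C.carrier} (f : InjHom B' C)
    (φ : CIso B B')
    (h : InjOn B.col ((f.compIso φ).frontier p) →
      HasPathDecompEndingIn B.gaifman k ((f.compIso φ).frontier p))
    (hinj : InjOn B'.col (f.frontier p)) : HasPathDecompEndingIn B'.gaifman k (f.frontier p) := by
  rw [frontier_compIso] at h
  exact (h (φ.injOn_col_preimage hinj)).map φ.gaifmanIso

theorem realises_unionLeft_iff (f : InjHom (X.union Y) C) {x : X.carrier}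
    {u : Fin 3 → C.carrier} (hu : u 1 = f (inl x)) : f.unionLeft.Realises u ↔ f.Realises u := by
  constructor
  · rintro ⟨w, hw, rfl⟩
    exact ⟨inl ∘ w, .inl ⟨w, fun _ => rfl, hw⟩, rfl⟩
  · rintro ⟨w, ⟨s, hs, hr⟩ | ⟨s, hs, -⟩, rfl⟩
    · exact ⟨s, hr, funext fun i => congrArg f (hs i).symm⟩
    · have := f.injective hu
      rw [hs 1] at this
      cases this

theorem frontier_unionLeft (f : InjHom (X.union Y) C) (p : C.carrier) :
    f.unionLeft.frontier p = inl ⁻¹' f.frontier p := by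
  ext x
  refine or_congr Iff.rfl (exists_congr fun u => and_congr_right fun hu => ?_)
  exact and_congr_right fun h1 => not_congr (f.realises_unionLeft_iff h1)

theorem frontier_subset_ofIntroduce {c : Fin 3 → ℕ} (f : InjHom (X.introduce () c) C)
    (p : C.carrier) : f.frontier p ⊆ f.ofIntroduce.frontier p := by
  rintro x (h | ⟨u, hu, h1, hnot⟩)
  · exact .inl h
  · exact .inr ⟨u, hu, h1, fun ⟨w, hw, hwu⟩ => hnot ⟨w, .inl hw, hwu⟩⟩

end InjHom

theorem eq_of_col_eq_of_mid {α : Type} {col : α → ℕ} {c₀ c₁ c₂ : ℕ}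
    (hvalid : ∀ a m b, col a = c₀ → col m = c₁ → col b = c₂ → a ≠ b ∧ (m = a ∨ m = b))
    {a b x y : α} (ha : col a = c₀) (hb : col b = c₂) (hx : col x = c₁) (hy : col y = c₁) :
    x = y := by
  obtain ⟨hab, hxa | hxb⟩ := hvalid a x b ha hx hb
  · subst hxa
    obtain ⟨-, h | h⟩ := hvalid y x b (hy.trans (hx.symm.trans ha)) hx hb
    exacts [h, absurd h hab]
  · subst hxb
    obtain ⟨-, h | h⟩ := hvalid a x y ha hx (hy.trans (hx.symm.trans hb))
    exacts [absurd h.symm hab, h]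

section Prime

variable {A : CStruc sigGraph} {B X Y : CStruc sigTernary}

theorem prime_rel_top {v : (prime A).carrier} (hv : v ≠ inr ()) :
    (prime A).rel () ![inr (), v, v] :=
  ⟨hv.symm, .inr rfl, .inr rfl⟩

theorem prime_rel_collapse {u : Fin 3 → (prime A).carrier} (hu : (prime A).rel () u) :
    (prime A).rel () ![u 0, u 2, u 2] :=
  ⟨hu.1, .inr rfl, hu.2.2⟩

theorem prime_rel_reverse (hsymm : ∀ a b : A.carrier, A.rel () ![a, b] → A.rel () ![b, a])
    {u : Fin 3 → (prime A).carrier} (hu : (prime A).rel () u) (h0 : u 0 ≠ inr ()) :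
    (prime A).rel () ![u 2, u 0, u 0] := by
  obtain ⟨hne, -, ⟨a, b, ha, hb, hab⟩ | ht⟩ := hu
  · exact ⟨hne.symm, .inr rfl, .inl ⟨b, a, hb, ha, hsymm a b hab⟩⟩
  · exact absurd ht h0

namespace InjHom

theorem rel_shape (f : InjHom B (prime A)) {w : Fin 3 → B.carrier} (hw : B.rel () w) :
    w 0 ≠ w 2 ∧ (w 1 = w 0 ∨ w 1 = w 2) :=
  have h := f.map_rel () w hw
  ⟨fun e => h.1 (congrArg f e), h.2.1.imp (f.injective ·) (f.injective ·)⟩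

/-- The missing tuple is `(t, y, y)`: no relation of `X.union Y` mixes the two sides. -/
theorem live_inr (f : InjHom (X.union Y) (prime A)) {a : X.carrier} (ha : f (inl a) = inr ())
    (y : Y.carrier) : f.Live (inr y) := by
  refine ⟨![inr (), f (inr y), f (inr y)], prime_rel_top fun h => ?_, rfl, ?_⟩
  · cases f.injective (h.trans ha.symm)
  · rintro ⟨w, ⟨s, hs, -⟩ | ⟨s, hs, -⟩, hwu⟩
    · have := f.injective (congrFun hwu 1)
      rw [hs 1] at this
      cases this
    · have := f.injective ((congrFun hwu 0).trans ha.symm)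
      rw [hs 0] at this
      cases this

theorem adj_or_mem_frontier (f : InjHom X (prime A)) {u : Fin 3 → (prime A).carrier}
    (hu : (prime A).rel () u) {x o : X.carrier} (h0 : u 0 = f x) (h1 : u 1 = f o)
    (hne : x ≠ o) : X.gaifman.Adj x o ∨ o ∈ f.frontier (inr ()) := by
  by_cases hr : f.Realises u
  · obtain ⟨w, hw, rfl⟩ := hr
    exact .inl ⟨hne, (), w, hw, ⟨0, f.injective h0⟩, ⟨1, f.injective h1⟩⟩
  · exact .inr (.inr ⟨u, hu, h1, hr⟩)

/-- Such an `x` is the middle of a newly introduced tuple. All tuples of `A'` have the shape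
`(a, a, b)` or `(a, b, b)` with `a ≠ b`, so a second element of the colour of `x` would make the
introduction produce a tuple of another shape. -/
theorem isIsolated_of_mem_frontier_ofIntroduce {c : Fin 3 → ℕ}
    (f : InjHom (X.introduce () c) (prime A)) {x : X.carrier}
    (hx : x ∈ f.ofIntroduce.frontier (inr ())) (hx' : x ∉ f.frontier (inr ())) :
    X.IsIsolated x := by
  obtain ht | ⟨u, hu, hu1, hnot⟩ := hx
  · exact absurd (.inl ht) hx'
  obtain ⟨w, hw, rfl⟩ : f.Realises u := by
    by_contra h
    exact hx' (.inr ⟨u, hu, hu1, h⟩)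
  obtain hw | hcol := CStruc.introduce_rel_iff.mp hw
  · exact absurd ⟨w, hw, rfl⟩ hnot
  have hvalid : ∀ a m b, X.col a = c 0 → X.col m = c 1 → X.col b = c 2 →
      a ≠ b ∧ (m = a ∨ m = b) := fun a m b h0 h1 h2 =>
    f.rel_shape (CStruc.introduce_rel_of_col (t := ![a, m, b]) fun i => by
      fin_cases i <;> assumption)
  obtain rfl : w 1 = x := f.injective hu1
  exact fun y hy => eq_of_col_eq_of_mid hvalid (hcol 0) (hcol 2) (hy.trans (hcol 1)) (hcol 1)

theorem exists_bag_of_introduce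
    (hsymm : ∀ a b : A.carrier, A.rel () ![a, b] → A.rel () ![b, a]) {c : Fin 3 → ℕ}
    (f : InjHom (X.introduce () c) (prime A)) {n : ℕ} (P : PathDecomp X.gaifman (n + 1))
    (hlast : f.ofIntroduce.frontier (inr ()) ⊆ P.bag (Fin.last n)) {w : Fin 3 → X.carrier}
    (hw : ∀ i, X.col (w i) = c i) : ∃ b, w 0 ∈ P.bag b ∧ w 2 ∈ P.bag b := by
  set g := f.ofIntroduce
  have hbag : ∀ x y, X.gaifman.Adj x y ∨ (x ∈ g.frontier (inr ()) ∧ y ∈ g.frontier (inr ())) →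
      ∃ b, x ∈ P.bag b ∧ y ∈ P.bag b := by
    rintro x y (h | ⟨hx, hy⟩)
    exacts [P.mem_edge x y h, ⟨_, hlast hx, hlast hy⟩]
  have hu := f.map_rel () w (CStruc.introduce_rel_of_col hw)
  obtain ⟨hne, hmid⟩ := f.rel_shape (CStruc.introduce_rel_of_col hw)
  by_cases hr : X.rel () w
  · exact hbag _ _ (.inl ⟨hne, (), w, hr, ⟨0, rfl⟩, ⟨2, rfl⟩⟩)
  have hw1 : w 1 ∈ g.frontier (inr ()) :=
    .inr ⟨f ∘ w, hu, rfl, fun ⟨w', hw', he⟩ => hr (g.injective.comp_left he ▸ hw')⟩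
  rcases hmid with h1 | h1
  · rcases g.adj_or_mem_frontier (prime_rel_collapse hu) rfl rfl hne with h | h
    exacts [hbag _ _ (.inl h), hbag _ _ (.inr ⟨h1 ▸ hw1, h⟩)]
  · by_cases ht : f (w 0) = inr ()
    · exact hbag _ _ (.inr ⟨.inl ht, h1 ▸ hw1⟩)
    rcases g.adj_or_mem_frontier (prime_rel_reverse hsymm hu ht) rfl rfl hne.symm with h | h
    exacts [hbag _ _ (.inl h.symm), hbag _ _ (.inr ⟨h, h1 ▸ hw1⟩)]

end InjHom

end Prime

/-- The invariant carried along a construction of `A'`. -/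
def AdmitsFrontierDecomp (A : CStruc sigGraph) (k : ℕ) (B : CStruc sigTernary) : Prop :=
  ∀ f : InjHom B (prime A), inr () ∈ range f → InjOn B.col (f.frontier (inr ())) →
    HasPathDecompEndingIn B.gaifman k (f.frontier (inr ()))

namespace AdmitsFrontierDecomp

variable {A : CStruc sigGraph} {k : ℕ} {B B' X Y : CStruc sigTernary}

theorem of_isEmpty (hB : IsEmpty B.carrier) : AdmitsFrontierDecomp A k B :=
  fun _ ⟨b, _⟩ => hB.elim b

theorem of_subsingleton (hk : 0 < k) (hB : ∀ a b : B.carrier, a = b) :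
    AdmitsFrontierDecomp A k B := by
  have : Subsingleton B.carrier := ⟨hB⟩
  exact fun _ _ _ => hasPathDecompEndingIn_of_ncard_le
    (((ncard_univ _).trans_le (Finite.card_le_one_iff_subsingleton.mpr this)).trans hk) _

theorem recolor (h : AdmitsFrontierDecomp A k B) (g : ℕ → ℕ) :
    AdmitsFrontierDecomp A k (B.recolor g) :=
  fun f hf hinj => h f.ofRecolor hf (InjOn.of_comp (g := g) hinj)

theorem of_iso (h : AdmitsFrontierDecomp A k B) (φ : CIso B B') :
    AdmitsFrontierDecomp A k B' := by
  rintro f ⟨b, hb⟩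
  refine f.hasPathDecompEndingIn_of_compIso φ (h _ ⟨φ.toEquiv.symm b, ?_⟩)
  change f (φ.toEquiv (φ.toEquiv.symm b)) = _
  rw [Equiv.apply_symm_apply, hb]

theorem hasPathDecompEndingIn_union (hX : AdmitsFrontierDecomp A k X)
    (hcol : ∀ z, (X.union Y).col z < k) (f : InjHom (X.union Y) (prime A)) {a : X.carrier}
    (ha : f (inl a) = inr ()) (hinj : InjOn (X.union Y).col (f.frontier (inr ()))) :
    HasPathDecompEndingIn (X.union Y).gaifman k (f.frontier (inr ())) := by
  have hF := f.frontier_unionLeft (inr ())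
  obtain ⟨n, P, hsize, hlast⟩ := hX f.unionLeft ⟨a, ha⟩
    (hF ▸ hinj.comp inl_injective.injOn (mapsTo_preimage _ _))
  have hY : ∀ y, inr y ∈ f.frontier (inr ()) := fun y => .inr (f.live_inr ha y)
  refine ⟨n + 1, P.snocMap ⟨inl, inl_injective⟩ (f.frontier (inr ()))
    (fun v hv => hlast (hF ▸ hv)) ?_ ?_, fun i => ?_, ?_⟩
  · rintro (x | y) h
    exacts [absurd ⟨x, rfl⟩ h, hY y]
  · intro u w h
    rcases CStruc.union_gaifman_adj h with h | ⟨y, y', rfl, rfl⟩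
    exacts [.inl h, .inr ⟨hY y, hY y'⟩]
  · induction i using Fin.lastCases with
    | last =>
      rw [PathDecomp.snocMap_bag_last]
      exact ncard_le_of_injOn_lt (fun z _ => hcol z) hinj
    | cast i =>
      rw [PathDecomp.snocMap_bag_castSucc, ncard_image_of_injective _ (Embedding.injective _)]
      exact hsize i
  · rw [PathDecomp.snocMap_bag_last]

theorem union (hX : AdmitsFrontierDecomp A k X) (hY : AdmitsFrontierDecomp A k Y)
    (hcol : ∀ z, (X.union Y).col z < k) : AdmitsFrontierDecomp A k (X.union Y) := by
  rintro f ⟨a | b, hz⟩ hinj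
  · exact hasPathDecompEndingIn_union hX hcol f hz hinj
  · have hcol' : ∀ z, (Y.union X).col z < k := fun z => by
      rw [← (CIso.unionComm X Y).col_eq]; exact hcol _
    exact f.hasPathDecompEndingIn_of_compIso (CIso.unionComm X Y)
      (hasPathDecompEndingIn_union hY hcol' _ (a := b) hz) hinj

theorem introduce (hsymm : ∀ a b : A.carrier, A.rel () ![a, b] → A.rel () ![b, a])
    (h : AdmitsFrontierDecomp A k X) (c : Fin 3 → ℕ) :
    AdmitsFrontierDecomp A k (X.introduce () c) := by
  intro f hf hinj
  have hsub := f.frontier_subset_ofIntroduce (inr ())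
  have hinj' : InjOn X.col (f.ofIntroduce.frontier (inr ())) := by
    intro x hx y hy hxy
    by_cases hxf : x ∈ f.frontier (inr ())
    · by_cases hyf : y ∈ f.frontier (inr ())
      · exact hinj hxf hyf hxy
      · exact f.isIsolated_of_mem_frontier_ofIntroduce hy hyf x hxy
    · exact (f.isIsolated_of_mem_frontier_ofIntroduce hx hxf y hxy.symm).symm
  obtain ⟨n, P, hsize, hlast⟩ := h f.ofIntroduce hf hinj'
  refine ⟨n, { P with mem_edge := fun u v huv => ?_ }, hsize, hsub.trans hlast⟩
  rcases CStruc.introduce_gaifman_adj huv with huv | ⟨w, hw, ⟨i, rfl⟩, ⟨j, rfl⟩⟩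
  · exact P.mem_edge u v huv
  obtain ⟨b, h0, h2⟩ := f.exists_bag_of_introduce hsymm P hlast hw
  have hmem : ∀ i, w i ∈ P.bag b := by
    obtain ⟨-, hmid⟩ := f.rel_shape (CStruc.introduce_rel_of_col hw)
    intro i
    fin_cases i
    exacts [h0, hmid.elim (· ▸ h0) (· ▸ h2), h2]
  exact ⟨b, hmem i, hmem j⟩

end AdmitsFrontierDecomp

theorem UCW.admitsFrontierDecomp {A : CStruc sigGraph}
    (hsymm : ∀ a b : A.carrier, A.rel () ![a, b] → A.rel () ![b, a]) {k : ℕ}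
    {B : CStruc sigTernary} (h : UCW sigTernary k B) : AdmitsFrontierDecomp A k B := by
  induction h with
  | empty _ hB => exact .of_isEmpty hB
  | single hk _ hB => exact .of_subsingleton hk hB
  | union hX hY ihX ihY => exact ihX.union ihY (hX.union hY).col_lt
  | recolor g _ _ ih => exact ih.recolor g
  | introduce _ c _ _ ih => exact ih.introduce hsymm c
  | iso φ _ ih => exact ih.of_iso φ

theorem stmt6_general (A : CStruc sigGraph) [Fintype A.carrier]
    (hsymm : ∀ a b : A.carrier, A.rel () ![a, b] → A.rel () ![b, a]) :
    pw (prime A).gaifman + 1 ≤ ucw (prime A) := by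
  have : Finite (prime A).carrier := inferInstanceAs (Finite (A.carrier ⊕ Unit))
  have hucw : UCW sigTernary (ucw (prime A)) (prime A) :=
    Nat.sInf_mem (UCW.exists_of_finite (prime A))
  have hdecomp := hucw.admitsFrontierDecomp hsymm (InjHom.id _) ⟨inr (), rfl⟩
    ((injOn_singleton _ _).mono (InjHom.frontier_id _).le)
  exact hdecomp.pw_lt (hucw.col_lt (inr ()))

/-- for the structure A' built from a graph A we have
ucw(A') ≥ pw(G_{A'}) + 1. -/
theorem stmt6 (A : CStruc sigGraph) [Fintype A.carrier]
    (hsymm : ∀ a b : A.carrier, A.rel () ![a, b] → A.rel () ![b, a])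
    (hirr : ∀ a : A.carrier, ¬ A.rel () ![a, a]) :
    pw (prime A).gaifman + 1 ≤ ucw (prime A) :=
  stmt6_general A hsymm
end

section
/- For every non-negative integer n there exists a finite structure A with a single ternary relation symbol such that tw(G_A) = 2 and ucw(A) > n. Hence unary clique-width is not bounded by any function of tree-width on structures with a ternary relation. -/
/-- A tree decomposition of `G` over an index graph `T` (intended to be a tree). -/
structure TreeDecomp {V ι : Type} (G : SimpleGraph V) (T : SimpleGraph ι) where
  bag : ι → Set V
  mem_bag : ∀ v, ∃ i, v ∈ bag i
  mem_edge : ∀ u v, G.Adj u v → ∃ i, u ∈ bag i ∧ v ∈ bag i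
  subtree : ∀ v : V, (T.induce {i | v ∈ bag i}).Connected

/-- `G` has tree-width at most `w`. -/
def twLe {V : Type} (G : SimpleGraph V) (w : ℕ) : Prop :=
  ∃ (ι : Type) (T : SimpleGraph ι), T.IsTree ∧
    ∃ D : TreeDecomp G T, ∀ i, (D.bag i).ncard ≤ w + 1

/-- The tree-width of `G`. -/
noncomputable def tw {V : Type} (G : SimpleGraph V) : ℕ := sInf {w | twLe G w}

/-!
The witness is the structure `A'` built from the complete ternary tree `T` of height `n + 1`.
Its Gaifman graph is `T` together with an apex adjacent to every vertex: adding the apex to the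
bags `{v, parent v}` of `T` gives width 2, and the apex with an edge of `T` is a triangle.

For the unary clique-width, read a UCW_k-derivation along the branch of its derivation tree that
leads to a fixed vertex `w`, and give every vertex `v` the interval of times from the moment it
joins the branch to the last moment at which it is alone in its colour class. Colour classes never
split, so at most `k` intervals meet at any time. When all tuples have the shape `(a, a, b)` or
`(a, b, b)`, a tuple `(a, a, b)` can only be introduced while `a` is alone in its colour, so the
interval of `b` starts before that of `a` ends, unless the tuple was created off the branch, in
which case `a` and `b` join the branch together. For `A'` and `w` the apex, the intervals of the
vertices of `T` form an interval model of `T` in which at most `k` intervals meet at a point. In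
any interval model of the complete ternary tree of height `h` some point lies in `h + 1`
intervals: extend the point found in the branch whose point is the median by a vertex outside
that branch, which exists because the other two branches are connected through the root.
-/

namespace SimpleGraph

variable {V : Type*}

def parentGraph (p : V → V) : SimpleGraph V := fromRel fun u v => v = p u

variable {p : V → V}

lemma parentGraph_adj {u v : V} : (parentGraph p).Adj u v ↔ u ≠ v ∧ (v = p u ∨ u = p v) :=
  fromRel_adj ..

section Rank

variable (rank : V → ℕ)

theorem isAcyclic_parentGraph (hrank : ∀ v, p v ≠ v → rank (p v) < rank v) :
    (parentGraph p).IsAcyclic := by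
  classical
  intro v c hc
  obtain ⟨u, hu, hmax⟩ := c.support.toFinset.exists_max_image rank ⟨v, by simp⟩
  rw [List.mem_toFinset] at hu
  have hc' := hc.rotate hu
  -- a vertex of maximal rank on the cycle has no cycle-neighbour other than its parent
  have hpar : ∀ x ∈ (c.rotate u hu).support, (parentGraph p).Adj u x → x = p u := by
    intro x hx hux
    obtain ⟨hne, h | h⟩ := parentGraph_adj.1 hux
    · exact h
    · have hx := hmax x (by simpa [Walk.mem_support_rotate_iff] using hx)
      have := hrank x (by rw [← h]; exact hne)
      rw [← h] at this
      omega
  refine hc'.snd_ne_penultimate ((hpar _ (Walk.getVert_mem_support _ 1) ?_).trans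
    (hpar _ (Walk.getVert_mem_support _ _) ?_).symm)
  · exact Walk.adj_snd hc'.not_nil
  · exact (Walk.adj_penultimate hc'.not_nil).symm

theorem parentGraph_reachable (hrank : ∀ v, p v ≠ v → rank (p v) < rank v) {r : V}
    (hr : ∀ v, p v = v → v = r) (v : V) :
    (parentGraph p).Reachable v r := by
  induction v using (measure rank).wf.induction with
  | h v ih =>
    by_cases hv : p v = v
    · rw [hr v hv]
    · exact (parentGraph_adj.2 ⟨Ne.symm hv, Or.inl rfl⟩).reachable.trans (ih _ (hrank v hv))

theorem isTree_parentGraph (hrank : ∀ v, p v ≠ v → rank (p v) < rank v) {r : V}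
    (hr : ∀ v, p v = v → v = r) : (parentGraph p).IsTree :=
  ⟨(connected_iff_exists_forall_reachable _).2
    ⟨r, fun v => (parentGraph_reachable rank hrank hr v).symm⟩, isAcyclic_parentGraph rank hrank⟩

end Rank

variable {G : SimpleGraph V}

theorem Connected.exists_isPath_of_induce {S : Set V} (hS : (G.induce S).Connected) {a b : V}
    (ha : a ∈ S) (hb : b ∈ S) : ∃ q : G.Walk a b, q.IsPath ∧ ∀ x ∈ q.support, x ∈ S := by
  classical
  obtain ⟨q⟩ := hS ⟨a, ha⟩ ⟨b, hb⟩
  refine ⟨(q.map (Embedding.induce S).toHom).bypass, Walk.bypass_isPath _, fun x hx => ?_⟩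
  have hx : x ∈ (q.map (Embedding.induce S).toHom).support :=
    Walk.support_bypass_subset_support _ hx
  rw [Walk.support_map] at hx
  obtain ⟨y, -, rfl⟩ := List.mem_map.1 hx
  exact y.2

theorem Walk.exists_mem_mem_of_forall_mem_or_mem {a b : V} (q : G.Walk a b) {Y Z : Set V}
    (ha : a ∈ Y) (hb : b ∈ Z) (hq : ∀ x ∈ q.support, x ∈ Y ∨ x ∈ Z) :
    ∃ u ∈ q.support, ∃ v ∈ q.support, u ∈ Y ∧ v ∈ Z ∧ (u = v ∨ G.Adj u v) := by
  induction q with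
  | nil => exact ⟨_, Walk.start_mem_support _, _, Walk.start_mem_support _, ha, hb, Or.inl rfl⟩
  | @cons a x b hax q ih =>
    rcases hq x (by simp) with hx | hx
    · obtain ⟨u, hu, v, hv, huv⟩ := ih hx hb (fun y hy => hq y (by simp [hy]))
      exact ⟨u, by simp [hu], v, by simp [hv], huv⟩
    · exact ⟨a, by simp, x, by simp, ha, hx, Or.inr hax⟩

theorem IsAcyclic.mem_or_mem_of_adj (hG : G.IsAcyclic) {Y Z : Set V}
    (hY : (G.induce Y).Connected) (hZ : (G.induce Z).Connected) {c u v : V}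
    (hcY : c ∈ Y) (hcZ : c ∈ Z) (hu : u ∈ Y) (hv : v ∈ Z) (huv : G.Adj u v) : u ∈ Z ∨ v ∈ Y := by
  obtain ⟨qu, hqu, hquY⟩ := hY.exists_isPath_of_induce hcY hu
  obtain ⟨qv, hqv, hqvZ⟩ := hZ.exists_isPath_of_induce hcZ hv
  by_cases h : u ∈ qv.support
  · exact Or.inl (hqvZ u h)
  · exact Or.inr (hquY v (hG.mem_support_of_ne_mem_support_of_adj_of_isPath hqu hqv huv h))

/-- Helly property of subtrees. -/
theorem IsAcyclic.inter_inter_nonempty (hG : G.IsAcyclic) {X Y Z : Set V}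
    (hX : (G.induce X).Connected) (hY : (G.induce Y).Connected) (hZ : (G.induce Z).Connected)
    {a b c : V} (haX : a ∈ X) (haY : a ∈ Y) (hbX : b ∈ X) (hbZ : b ∈ Z) (hcY : c ∈ Y)
    (hcZ : c ∈ Z) : (X ∩ Y ∩ Z).Nonempty := by
  classical
  obtain ⟨q₁, -, hq₁⟩ := hY.exists_isPath_of_induce haY hcY
  obtain ⟨q₂, -, hq₂⟩ := hZ.exists_isPath_of_induce hcZ hbZ
  obtain ⟨q, hq, hqX⟩ := hX.exists_isPath_of_induce haX hbX
  have hqYZ : ∀ x ∈ q.support, x ∈ Y ∨ x ∈ Z := by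
    have : q = (q₁.append q₂).bypass := congrArg Subtype.val
      ((hG.subsingleton_path a b).elim ⟨q, hq⟩ ⟨_, Walk.bypass_isPath _⟩)
    intro x hx
    rw [this] at hx
    rcases (Walk.mem_support_append_iff _ _).1 (Walk.support_bypass_subset_support _ hx) with h | h
    exacts [Or.inl (hq₁ x h), Or.inr (hq₂ x h)]
  obtain ⟨u, hu, v, hv, huY, hvZ, rfl | huv⟩ := q.exists_mem_mem_of_forall_mem_or_mem haY hbZ hqYZ
  · exact ⟨u, ⟨hqX u hu, huY⟩, hvZ⟩
  · rcases hG.mem_or_mem_of_adj hY hZ hcY hcZ huY hvZ huv with h | h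
    exacts [⟨u, ⟨hqX u hu, huY⟩, h⟩, ⟨v, ⟨hqX v hv, h⟩, hvZ⟩]

theorem Reachable.exists_lo_le_le_hi {lo hi : V → ℕ} (hadj : ∀ u v, G.Adj u v → lo u ≤ hi v)
    {u v : V} (huv : G.Reachable u v) {z : ℕ} (hu : lo u ≤ z) (hv : z ≤ hi v) :
    ∃ x, lo x ≤ z ∧ z ≤ hi x := by
  obtain ⟨q⟩ := huv
  induction q with
  | nil => exact ⟨_, hu, hv⟩
  | @cons u x v hux q ih =>
    by_cases hz : z ≤ hi u
    · exact ⟨u, hu, hz⟩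
    · exact ih ((hadj x u hux.symm).trans (by omega)) hv

end SimpleGraph

section TreeWidth

variable {V ι : Type} {G : SimpleGraph V} {T : SimpleGraph ι}

theorem TreeDecomp.exists_bag_of_triangle (D : TreeDecomp G T) (hT : T.IsAcyclic) {x y z : V}
    (hxy : G.Adj x y) (hxz : G.Adj x z) (hyz : G.Adj y z) :
    ∃ i, x ∈ D.bag i ∧ y ∈ D.bag i ∧ z ∈ D.bag i := by
  obtain ⟨a, hax, hay⟩ := D.mem_edge x y hxy
  obtain ⟨b, hbx, hbz⟩ := D.mem_edge x z hxz
  obtain ⟨c, hcy, hcz⟩ := D.mem_edge y z hyz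
  obtain ⟨i, ⟨hix, hiy⟩, hiz⟩ := hT.inter_inter_nonempty (D.subtree x) (D.subtree y)
    (D.subtree z) hax hay hbx hbz hcy hcz
  exact ⟨i, hix, hiy, hiz⟩

theorem twLe_mono {w w' : ℕ} (hw : w ≤ w') (h : twLe G w) : twLe G w' := by
  obtain ⟨ι, T, hT, D, hD⟩ := h
  exact ⟨ι, T, hT, D, fun i => (hD i).trans (by omega)⟩

theorem not_twLe_one_of_triangle [Finite V] {x y z : V} (hxy : G.Adj x y) (hxz : G.Adj x z)
    (hyz : G.Adj y z) : ¬ twLe G 1 := by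
  rintro ⟨ι, T, hT, D, hD⟩
  obtain ⟨i, hx, hy, hz⟩ := D.exists_bag_of_triangle hT.isAcyclic hxy hxz hyz
  have h3 : ({x, y, z} : Set V).ncard = 3 :=
    Set.ncard_eq_three.2 ⟨x, y, z, hxy.ne, hxz.ne, hyz.ne, rfl⟩
  have := Set.ncard_le_ncard (by simp [Set.insert_subset_iff, hx, hy, hz] :
    ({x, y, z} : Set V) ⊆ D.bag i)
  have := hD i
  omega

theorem tw_eq_of_twLe_of_not_twLe {w : ℕ} (h : twLe G (w + 1)) (h' : ¬ twLe G w) :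
    tw G = w + 1 :=
  le_antisymm (Nat.sInf_le h) (le_csInf ⟨_, h⟩ fun w' hw' => by
    by_contra hlt
    exact h' (twLe_mono (by omega) hw'))

theorem twLe_parentGraph_one {p : V → V} (rank : V → ℕ)
    (hrank : ∀ v, p v ≠ v → rank (p v) < rank v) {r : V} (hr : ∀ v, p v = v → v = r) :
    twLe (SimpleGraph.parentGraph p) 1 := by
  refine ⟨V, _, SimpleGraph.isTree_parentGraph rank hrank hr,
    ⟨fun v => {v, p v}, fun v => ⟨v, by simp⟩, fun u v huv => ?_, fun a => ?_⟩,
    fun v => (Set.ncard_insert_le _ _).trans (by simp)⟩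
  · rcases (SimpleGraph.parentGraph_adj.1 huv).2 with h | h
    exacts [⟨u, by simp, by simp [h]⟩, ⟨v, by simp [h], by simp⟩]
  · -- the bags containing `a` are those of `a` and of its children: a star around `a`
    refine SimpleGraph.induce_connected_of_patches a (by simp) fun {i} hi => ?_
    refine ⟨{a, i}, Set.insert_subset_iff.2 ⟨by simp, Set.singleton_subset_iff.2 hi⟩, by simp,
      by simp, ?_⟩
    by_cases hia : i = a
    · subst hia; rfl
    · have hpi : p i = a := by simpa [Ne.symm hia, eq_comm] using hi
      exact (SimpleGraph.induce_pair_connected_of_adj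
        (SimpleGraph.parentGraph_adj.2 ⟨Ne.symm hia, Or.inr hpi.symm⟩)) _ _

end TreeWidth

/-- A vertex is the sequence of branch choices leading to it from the root. -/
def TernaryTree (n : ℕ) : Type := {l : List (Fin 3) // l.length ≤ n}

instance (n : ℕ) : Finite (TernaryTree n) := (List.finite_length_le (Fin 3) n).to_subtype

namespace TernaryTree

variable {n : ℕ}

def root (n : ℕ) : TernaryTree n := ⟨[], Nat.zero_le n⟩

def parent (v : TernaryTree n) : TernaryTree n :=
  ⟨v.1.dropLast, List.length_dropLast ▸ (Nat.sub_le _ _).trans v.2⟩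

def branch (i : Fin 3) (v : TernaryTree n) : TernaryTree (n + 1) := ⟨i :: v.1, Nat.succ_le_succ v.2⟩

lemma length_parent_lt {v : TernaryTree n} (hv : parent v ≠ v) :
    (parent v).1.length < v.1.length := by
  have : v.1 ≠ [] := fun h0 => hv (Subtype.ext (by simp [parent, h0]))
  simpa [parent] using List.length_pos_iff.2 this

lemma eq_root_of_parent_eq {v : TernaryTree n} (hv : parent v = v) : v = root n := by
  have := congrArg (fun v : TernaryTree n => v.1.length) hv
  simp only [parent, List.length_dropLast] at this
  exact Subtype.ext (List.eq_nil_of_length_eq_zero (by omega))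

lemma parent_branch {i : Fin 3} {v : TernaryTree n} (hv : parent v ≠ v) :
    parent (branch i v) = branch i (parent v) := by
  have : v.1 ≠ [] := fun h0 => hv (Subtype.ext (by simp [parent, h0]))
  exact Subtype.ext (List.dropLast_cons_of_ne_nil this)

lemma parent_branch_root (i : Fin 3) : parent (branch i (root n)) = root (n + 1) := rfl

lemma branch_injective (i : Fin 3) : Function.Injective (branch (n := n) i) :=
  fun _ _ huv => Subtype.ext (List.cons_injective (congrArg Subtype.val huv))

lemma branch_ne_branch {i j : Fin 3} (hij : i ≠ j) (u v : TernaryTree n) :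
    branch i u ≠ branch j v :=
  fun huv => hij (List.head_eq_of_cons_eq (congrArg Subtype.val huv))

lemma root_ne_branch (i : Fin 3) (v : TernaryTree n) : root (n + 1) ≠ branch i v :=
  fun huv => List.cons_ne_nil _ _ (congrArg Subtype.val huv).symm

end TernaryTree

open TernaryTree

def ternaryTree (n : ℕ) : SimpleGraph (TernaryTree n) := SimpleGraph.parentGraph parent

namespace TernaryTree

variable {n : ℕ}

lemma isTree_ternaryTree : (ternaryTree n).IsTree :=
  SimpleGraph.isTree_parentGraph (fun v => v.1.length) (fun _ => length_parent_lt)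
    fun _ => eq_root_of_parent_eq

lemma twLe_ternaryTree_one : twLe (ternaryTree n) 1 :=
  twLe_parentGraph_one (fun v => v.1.length) (fun _ => length_parent_lt)
    fun _ => eq_root_of_parent_eq

lemma branch_adj_branch (i : Fin 3) {u v : TernaryTree n} (huv : (ternaryTree n).Adj u v) :
    (ternaryTree (n + 1)).Adj (branch i u) (branch i v) := by
  obtain ⟨hne, hvu | huv⟩ := SimpleGraph.parentGraph_adj.1 huv
  · refine SimpleGraph.parentGraph_adj.2 ⟨(branch_injective i).ne hne, Or.inl ?_⟩
    rw [parent_branch (hvu ▸ hne.symm), hvu]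
  · refine SimpleGraph.parentGraph_adj.2 ⟨(branch_injective i).ne hne, Or.inr ?_⟩
    rw [parent_branch (huv ▸ hne), huv]

lemma branch_root_adj_root (i : Fin 3) :
    (ternaryTree (n + 1)).Adj (branch i (root n)) (root (n + 1)) :=
  SimpleGraph.parentGraph_adj.2 ⟨(root_ne_branch i _).symm, Or.inl (parent_branch_root i).symm⟩

end TernaryTree

lemma Fin.exists_median (f : Fin 3 → ℕ) :
    ∃ a b c : Fin 3, a ≠ b ∧ c ≠ b ∧ f a ≤ f b ∧ f b ≤ f c := by
  rcases le_total (f 0) (f 1) with h01 | h01 <;> rcases le_total (f 1) (f 2) with h12 | h12 <;>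
    rcases le_total (f 0) (f 2) with h02 | h02
  all_goals first
    | exact ⟨0, 1, 2, by decide, by decide, by omega, by omega⟩
    | exact ⟨0, 2, 1, by decide, by decide, by omega, by omega⟩
    | exact ⟨1, 0, 2, by decide, by decide, by omega, by omega⟩
    | exact ⟨1, 2, 0, by decide, by decide, by omega, by omega⟩
    | exact ⟨2, 0, 1, by decide, by decide, by omega, by omega⟩
    | exact ⟨2, 1, 0, by decide, by decide, by omega, by omega⟩

namespace TernaryTree

variable {n : ℕ}

theorem exists_lo_le_le_hi_of_ne_branch {lo hi : TernaryTree (n + 1) → ℕ}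
    (hadj : ∀ u v, (ternaryTree (n + 1)).Adj u v → lo u ≤ hi v) {a b c : Fin 3} (hab : a ≠ b)
    (hcb : c ≠ b) {va vc : TernaryTree n} {z : ℕ} (ha : lo (branch a va) ≤ z)
    (hc : z ≤ hi (branch c vc)) : ∃ x, (∀ v, x ≠ branch b v) ∧ lo x ≤ z ∧ z ≤ hi x := by
  have hreach := (isTree_ternaryTree (n := n)).connected.preconnected
  have hsub : ∀ i, ∀ u v, (ternaryTree n).Adj u v → (lo ∘ branch i) u ≤ (hi ∘ branch i) v :=
    fun i u v huv => hadj _ _ (branch_adj_branch i huv)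
  by_cases h₁ : z ≤ hi (branch a (root n))
  · obtain ⟨x, hx⟩ := (hreach va (root n)).exists_lo_le_le_hi (hsub a) ha h₁
    exact ⟨branch a x, branch_ne_branch hab x, hx⟩
  by_cases h₂ : z ≤ hi (root (n + 1))
  · have := hadj _ _ (branch_root_adj_root a).symm
    exact ⟨root (n + 1), root_ne_branch b, by omega, h₂⟩
  · have := hadj _ _ (branch_root_adj_root c)
    obtain ⟨x, hx⟩ := (hreach (root n) vc).exists_lo_le_le_hi (hsub c) (by simp; omega) hc
    exact ⟨branch c x, branch_ne_branch hcb x, hx⟩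

theorem exists_card_eq_of_intervals : ∀ {n : ℕ} {lo hi : TernaryTree n → ℕ},
    (∀ v, lo v ≤ hi v) → (∀ u v, (ternaryTree n).Adj u v → lo u ≤ hi v) →
    ∃ z, ∃ S : Finset (TernaryTree n), S.card = n + 1 ∧ ∀ v ∈ S, lo v ≤ z ∧ z ≤ hi v
  | 0, lo, _, hle, _ => ⟨lo (root 0), {root 0}, rfl, by simpa using hle (root 0)⟩
  | n + 1, lo, hi, hle, hadj => by
    classical
    choose z S hcard hS using fun i : Fin 3 => exists_card_eq_of_intervals
      (lo := lo ∘ branch i) (hi := hi ∘ branch i) (fun v => hle _)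
      (fun u v huv => hadj _ _ (branch_adj_branch i huv))
    -- the branch whose point is the median is extended by a vertex outside it
    obtain ⟨a, b, c, hab, hcb, hzab, hzbc⟩ := Fin.exists_median z
    obtain ⟨va, hva⟩ := Finset.card_pos.1 (by rw [hcard]; omega : 0 < (S a).card)
    obtain ⟨vc, hvc⟩ := Finset.card_pos.1 (by rw [hcard]; omega : 0 < (S c).card)
    obtain ⟨x, hx, hxz⟩ := exists_lo_le_le_hi_of_ne_branch hadj hab hcb
      ((hS a va hva).1.trans hzab) (hzbc.trans (hS c vc hvc).2)
    refine ⟨z b, insert x ((S b).map ⟨branch b, branch_injective b⟩), ?_, ?_⟩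
    · rw [Finset.card_insert_of_notMem (by simpa using fun v _ => (hx v).symm), Finset.card_map,
        hcard]
    · intro v hv
      rcases Finset.mem_insert.1 hv with rfl | hv
      · exact hxz
      · obtain ⟨y, hy, rfl⟩ := Finset.mem_map.1 hv
        exact hS b y hy

end TernaryTree

/-- An interval supergraph of `G` in which every point lies in at most `k` intervals, i.e. a
witness that `G` has pathwidth less than `k`. -/
structure IsIntervalModel {V : Type*} (G : SimpleGraph V) (k : ℕ) (lo hi : V → ℕ) : Prop where
  lo_le_hi : ∀ v, lo v ≤ hi v
  lo_le_hi_of_adj : ∀ u v, G.Adj u v → lo u ≤ hi v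
  card_le : ∀ j (S : Finset V), (∀ v ∈ S, lo v ≤ j ∧ j ≤ hi v) → S.card ≤ k

theorem TernaryTree.succ_le_of_isIntervalModel {n k : ℕ} {lo hi : TernaryTree n → ℕ}
    (hm : IsIntervalModel (ternaryTree n) k lo hi) : n + 1 ≤ k := by
  obtain ⟨z, S, hS, hcov⟩ := exists_card_eq_of_intervals hm.lo_le_hi hm.lo_le_hi_of_adj
  exact hS ▸ hm.card_le z S hcov

def CStruc.ofGraph {V : Type} (G : SimpleGraph V) : CStruc sigGraph where
  carrier := V
  rel _ u := G.Adj (u 0) (u 1)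
  col _ := 0

instance {V : Type} [Finite V] (G : SimpleGraph V) : Finite (CStruc.ofGraph G).carrier :=
  inferInstanceAs (Finite V)

instance (A : CStruc sigGraph) [Finite A.carrier] : Finite (prime A).carrier :=
  inferInstanceAs (Finite (A.carrier ⊕ Unit))

instance (A : CStruc sigGraph) : Nonempty (prime A).carrier := ⟨Sum.inr ()⟩

section Apex

variable {V : Type} {G : SimpleGraph V}

lemma prime_ofGraph_rel_apex (v : V) :
    (prime (CStruc.ofGraph G)).rel () ![Sum.inr (), Sum.inl v, Sum.inl v] :=
  ⟨by simp, Or.inr rfl, Or.inr rfl⟩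

lemma prime_ofGraph_rel_of_adj {a b : V} (hab : G.Adj a b) :
    (prime (CStruc.ofGraph G)).rel () ![Sum.inl a, Sum.inl a, Sum.inl b] :=
  ⟨fun h => hab.ne (Sum.inl_injective h), Or.inl rfl, Or.inl ⟨a, b, rfl, rfl, hab⟩⟩

def apexGraph (G : SimpleGraph V) : SimpleGraph (V ⊕ Unit) :=
  SimpleGraph.fromRel fun x y => y = Sum.inr () ∨ ∃ a b, x = Sum.inl a ∧ y = Sum.inl b ∧ G.Adj a b

lemma apexGraph_adj_apex (v : V) : (apexGraph G).Adj (Sum.inl v) (Sum.inr ()) :=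
  (SimpleGraph.fromRel_adj ..).2 ⟨by simp, Or.inl (Or.inl rfl)⟩

lemma apexGraph_adj_inl {a b : V} (hab : G.Adj a b) : (apexGraph G).Adj (Sum.inl a) (Sum.inl b) :=
  (SimpleGraph.fromRel_adj ..).2 ⟨by simpa using hab.ne, Or.inl (Or.inr ⟨a, b, rfl, rfl, hab⟩)⟩

theorem gaifman_prime_ofGraph :
    (prime (CStruc.ofGraph G)).gaifman = (apexGraph G : SimpleGraph (V ⊕ Unit)) := by
  ext x y
  constructor
  · rintro ⟨hne, R, u, ⟨h02, h1, hE⟩, ⟨i, rfl⟩, ⟨j, rfl⟩⟩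
    have hrange : ∀ i, u i = u 0 ∨ u i = u 2 := by
      intro i; fin_cases i
      exacts [Or.inl rfl, h1, Or.inr rfl]
    refine (SimpleGraph.fromRel_adj ..).2 ⟨hne, ?_⟩
    rcases hE with ⟨a, b, ha, hb, hab⟩ | ht
    · rcases hrange i with hi | hi <;> rcases hrange j with hj | hj
      · exact absurd (hi.trans hj.symm) hne
      · exact Or.inl (Or.inr ⟨a, b, hi.trans ha, hj.trans hb, hab⟩)
      · exact Or.inl (Or.inr ⟨b, a, hi.trans hb, hj.trans ha, hab.symm⟩)
      · exact absurd (hi.trans hj.symm) hne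
    · rcases hrange i with hi | hi <;> rcases hrange j with hj | hj
      · exact absurd (hi.trans hj.symm) hne
      · exact Or.inr (Or.inl (hi.trans ht))
      · exact Or.inl (Or.inl (hj.trans ht))
      · exact absurd (hi.trans hj.symm) hne
  · intro hxy
    obtain ⟨hne, hr⟩ := (SimpleGraph.fromRel_adj ..).1 hxy
    suffices h : ∀ x y : V ⊕ Unit, x ≠ y →
        (y = Sum.inr () ∨ ∃ a b, x = Sum.inl a ∧ y = Sum.inl b ∧ G.Adj a b) →
        (prime (CStruc.ofGraph G)).gaifman.Adj x y by
      rcases hr with hr | hr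
      exacts [h x y hne hr, (h y x hne.symm hr).symm]
    rintro x y hne (rfl | ⟨a, b, rfl, rfl, hab⟩)
    · obtain ⟨v, rfl⟩ : ∃ v, x = Sum.inl v := by
        rcases x with v | ⟨⟩
        exacts [⟨v, rfl⟩, absurd rfl hne]
      exact ⟨hne, (), _, prime_ofGraph_rel_apex v, ⟨1, rfl⟩, ⟨0, rfl⟩⟩
    · exact ⟨hne, (), _, prime_ofGraph_rel_of_adj hab, ⟨0, rfl⟩, ⟨2, rfl⟩⟩

theorem twLe_apexGraph {w : ℕ} (h : twLe G w) : twLe (apexGraph G) (w + 1) := by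
  obtain ⟨ι, T, hT, D, hD⟩ := h
  obtain ⟨i₀⟩ := hT.connected.nonempty
  let bag : ι → Set (V ⊕ Unit) := fun i => insert (Sum.inr ()) (Sum.inl '' D.bag i)
  have hapex : ∀ v, ∃ i, Sum.inl v ∈ bag i ∧ Sum.inr () ∈ bag i := fun v => by
    obtain ⟨i, hi⟩ := D.mem_bag v
    exact ⟨i, by simp [bag, hi], by simp [bag]⟩
  refine ⟨ι, T, hT, ⟨bag, ?_, fun x y hxy => ?_, ?_⟩, fun i => ?_⟩
  · rintro (v | ⟨⟨⟩⟩)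
    · exact (hapex v).imp fun _ => And.left
    · exact ⟨i₀, by simp [bag]⟩
  · obtain ⟨hne, (rfl | ⟨a, b, rfl, rfl, hab⟩) | (rfl | ⟨a, b, rfl, rfl, hab⟩)⟩ :=
      (SimpleGraph.fromRel_adj ..).1 hxy
    · rcases x with v | ⟨⟨⟩⟩
      exacts [hapex v, absurd rfl hne]
    · obtain ⟨i, ha, hb⟩ := D.mem_edge a b hab
      exact ⟨i, by simp [bag, ha], by simp [bag, hb]⟩
    · rcases y with v | ⟨⟨⟩⟩
      exacts [(hapex v).imp fun _ => And.symm, absurd rfl hne]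
    · obtain ⟨i, ha, hb⟩ := D.mem_edge a b hab
      exact ⟨i, by simp [bag, hb], by simp [bag, ha]⟩
  · rintro (v | ⟨⟨⟩⟩)
    · rw [show {i | Sum.inl v ∈ bag i} = {i | v ∈ D.bag i} by ext; simp [bag]]
      exact D.subtree v
    · rw [show {i | Sum.inr () ∈ bag i} = Set.univ by ext; simp [bag]]
      exact (SimpleGraph.induceUnivIso T).symm.connected_iff.1 hT.connected
  · calc (bag i).ncard ≤ (Sum.inl '' D.bag i : Set (V ⊕ Unit)).ncard + 1 := Set.ncard_insert_le _ _
      _ ≤ w + 1 + 1 := by rw [Set.ncard_image_of_injective _ Sum.inl_injective]; have := hD i; omega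

theorem not_twLe_apexGraph_one [Finite V] {a b : V} (hab : G.Adj a b) :
    ¬ twLe (apexGraph G) 1 :=
  not_twLe_one_of_triangle (apexGraph_adj_apex a).symm (apexGraph_adj_apex b).symm
    (apexGraph_adj_inl hab)

end Apex

section UCWBasics

variable {σ : Signature} {k : ℕ}

def CStruc.HasUniqueCol (B : CStruc σ) (v : B.carrier) : Prop :=
  ∀ u, B.col u = B.col v → u = v

lemma CStruc.introduce_rel_self (A : CStruc σ) (R : σ.symbols) (c : Fin (σ.ar R) → ℕ)
    (u : Fin (σ.ar R) → A.carrier) :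
    (A.introduce R c).rel R u ↔ A.rel R u ∨ ∀ i, A.col (u i) = c i := by
  simp [CStruc.introduce]

theorem UCW.col_lt_s8 {B : CStruc σ} (h : UCW σ k B) (v : B.carrier) : B.col v < k := by
  induction h with
  | empty A hA => exact (hA.false v).elim
  | single hk A _ _ _ hcol => exact (hcol v).symm ▸ hk
  | union _ _ ihA ihB => rcases v with a | b; exacts [ihA a, ihB b]
  | recolor f hf _ ih => exact hf _ (ih v)
  | introduce _ _ _ _ ih => exact ih v
  | iso e _ ih =>
    rw [← e.toEquiv.apply_symm_apply v, e.col_eq]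
    exact ih _

theorem card_le_of_hasUniqueCol {B : CStruc σ} (hcol : ∀ v, B.col v < k) (S : Finset B.carrier)
    (hS : ∀ v ∈ S, B.HasUniqueCol v) : S.card ≤ k :=
  calc S.card ≤ (Finset.range k).card :=
        Finset.card_le_card_of_injOn B.col (fun v _ => Finset.mem_range.2 (hcol v))
          fun v _ u hu huv => (hS u hu v huv).symm ▸ rfl
    _ = k := Finset.card_range k

lemma UCW.of_iff {A : CStruc σ} {rel : ∀ R : σ.symbols, (Fin (σ.ar R) → A.carrier) → Prop}
    {col : A.carrier → ℕ} (h : UCW σ k A) (hrel : ∀ R u, A.rel R u ↔ rel R u)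
    (hcol : ∀ a, A.col a = col a) : UCW σ k ⟨A.carrier, rel, col⟩ :=
  UCW.iso (A := A) (B := ⟨A.carrier, rel, col⟩) ⟨Equiv.refl _, hrel, fun a => (hcol a).symm⟩ h

theorem UCW.discrete_s8 (α : Type) [Finite α] :
    ∀ col : α → ℕ, (∀ a, col a < k) → UCW σ k ⟨α, fun _ _ => False, col⟩ := by
  induction α using Finite.induction_empty_option with
  | of_equiv e ih =>
    intro col hcol
    exact UCW.iso ⟨e, fun _ _ => Iff.rfl, fun _ => by simp⟩ (ih (col ∘ e) fun a => hcol (e a))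
  | h_empty => exact fun col _ => UCW.empty _ (inferInstanceAs (IsEmpty PEmpty))
  | @h_option α _ ih =>
    intro col hcol
    have hpt : UCW σ k ⟨PUnit, fun _ _ => False, fun _ => col none⟩ :=
      UCW.recolor (A := ⟨PUnit, fun _ _ => False, fun _ => 0⟩) (fun _ => col none)
        (fun _ _ => hcol none)
        (UCW.single ((Nat.zero_le _).trans_lt (hcol none)) _ (fun _ _ => rfl) ⟨.unit⟩
          (fun _ _ h => h) fun _ => rfl)
    refine UCW.iso ⟨(Equiv.optionEquivSumPUnit α).symm, fun R t => ?_, ?_⟩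
      ((ih (col ∘ some) fun a => hcol (some a)).union hpt)
    · simp [CStruc.union]
    · rintro (a | ⟨⟩) <;> rfl

theorem UCW.of_finite [Finite σ.symbols] (A : CStruc σ) [Finite A.carrier] [Nonempty A.carrier]
    (hcol : ∀ a, A.col a = 0) : UCW σ (Nat.card A.carrier) A := by
  classical
  set K := Nat.card A.carrier
  let e := Finite.equivFin A.carrier
  let col : A.carrier → ℕ := fun a => e a
  have hcolK : ∀ a, col a < K := fun a => (e a).isLt
  -- introduce the tuples one at a time, each along its own (injective) colour tuple
  have key : ∀ s : Finset (Σ R : σ.symbols, Fin (σ.ar R) → A.carrier),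
      UCW σ K ⟨A.carrier, fun R u => ⟨R, u⟩ ∈ s, col⟩ := by
    intro s
    induction s using Finset.induction_on with
    | empty => exact (UCW.discrete_s8 A.carrier col hcolK).of_iff (by simp) fun _ => rfl
    | @insert x s _ ih =>
      refine (UCW.introduce (A := ⟨A.carrier, fun R u => ⟨R, u⟩ ∈ s, col⟩) x.1 (col ∘ x.2)
        (fun i => hcolK _) ih).of_iff (fun R u => ?_) fun _ => rfl
      obtain ⟨R', u'⟩ := x
      simp only [CStruc.introduce, Finset.mem_insert]
      rw [or_comm]
      refine or_congr_left ⟨?_, ?_⟩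
      · rintro ⟨rfl, h⟩
        congr
        funext i
        exact e.injective (Fin.val_injective (by simpa using h i))
      · intro h
        cases h
        exact ⟨rfl, fun _ => rfl⟩
  have hfin := Set.toFinite {x : Σ R : σ.symbols, Fin (σ.ar R) → A.carrier | A.rel x.1 x.2}
  have := (key hfin.toFinset).recolor (fun _ => 0) fun _ _ => Nat.card_pos
  exact this.of_iff (fun R u => hfin.mem_toFinset) fun a => (hcol a).symm

end UCWBasics

def CIso.unionComm_s8 {σ : Signature} (A B : CStruc σ) : CIso (A.union B) (B.union A) where
  toEquiv := Equiv.sumComm _ _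
  rel_iff R t := by
    constructor
    · rintro (⟨s, hs, h⟩ | ⟨s, hs, h⟩)
      · exact Or.inr ⟨s, fun i => congrArg (Equiv.sumComm _ _) (hs i), h⟩
      · exact Or.inl ⟨s, fun i => congrArg (Equiv.sumComm _ _) (hs i), h⟩
    · rintro (⟨s, hs, h⟩ | ⟨s, hs, h⟩)
      · exact Or.inr ⟨s, fun i => (Equiv.sumComm _ _).injective (hs i), h⟩
      · exact Or.inl ⟨s, fun i => (Equiv.sumComm _ _).injective (hs i), h⟩
  col_eq := by rintro (a | b) <;> rfl

def IsPairShaped (B : CStruc sigTernary) : Prop :=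
  ∀ u, B.rel () u → (u 1 = u 0 ∨ u 1 = u 2) ∧ u 0 ≠ u 2

lemma IsPairShaped.comap {A B : CStruc sigTernary} (hB : IsPairShaped B)
    {f : A.carrier → B.carrier} (hf : Function.Injective f)
    (hrel : ∀ u, A.rel () u → B.rel () (f ∘ u)) : IsPairShaped A := fun u hu =>
  have h := hB _ (hrel u hu)
  ⟨h.1.imp (fun h => hf h) (fun h => hf h), fun h' => h.2 (congrArg f h')⟩

lemma isPairShaped_prime (A : CStruc sigGraph) : IsPairShaped (prime A) :=
  fun _ hu => ⟨hu.2.1, hu.1⟩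

lemma IsPairShaped.hasUniqueCol_of_introduce {A : CStruc sigTernary} {c : Fin 3 → ℕ}
    (hC : IsPairShaped (A.introduce () c)) {u : Fin 3 → A.carrier}
    (hu : ∀ i, A.col (u i) = c i) :
    (u 1 = u 0 → A.HasUniqueCol (u 0)) ∧ (u 1 = u 2 → A.HasUniqueCol (u 2)) := by
  have hu02 := (hC u ((A.introduce_rel_self () c u).2 (Or.inr hu))).2
  -- replacing the repeated entry by another vertex of its colour gives a tuple that is
  -- introduced as well, and pair-shapedness forces the two to coincide
  refine ⟨fun h x hx => ?_, fun h x hx => ?_⟩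
  · have := hC ![x, u 0, u 2] ((A.introduce_rel_self () c _).2 (Or.inr fun i => by
      fin_cases i
      exacts [hx.trans (hu 0), h ▸ hu 1, hu 2]))
    exact (this.1.resolve_right hu02).symm
  · have := hC ![u 0, u 2, x] ((A.introduce_rel_self () c _).2 (Or.inr fun i => by
      fin_cases i
      exacts [hu 0, h ▸ hu 1, hx.trans (hu 2)]))
    exact (this.1.resolve_left (Ne.symm hu02)).symm

section Linked

variable {α β : Type*} {lo hi hi' : α → ℕ} {w a b : α}

def Linked (lo hi : α → ℕ) (w a b : α) : Prop :=
  lo a ≤ hi a ∧ lo b ≤ hi a ∨ lo a = lo b ∧ b ≠ w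

lemma Linked.mono (hhi : ∀ v, hi v ≤ hi' v) : Linked lo hi w a b → Linked lo hi' w a b
  | Or.inl h => Or.inl ⟨h.1.trans (hhi a), h.2.trans (hhi a)⟩
  | Or.inr h => Or.inr h

lemma Linked.map_inl {lo₂ : β → ℕ} {hi' : α ⊕ β → ℕ} (hhi : ∀ v, hi v ≤ hi' (Sum.inl v)) :
    Linked lo hi w a b →
      Linked (Sum.elim lo lo₂) hi' (Sum.inl w) (Sum.inl a) (Sum.inl b)
  | Or.inl h => Or.inl ⟨h.1.trans (hhi a), h.2.trans (hhi a)⟩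
  | Or.inr h => Or.inr ⟨h.1, fun hb => h.2 (Sum.inl_injective hb)⟩

end Linked

section RaiseHi

variable {σ : Signature} {B : CStruc σ} {k m : ℕ} {lo hi : B.carrier → ℕ}

open Classical in
noncomputable def raiseHi (B : CStruc σ) (m : ℕ) (hi : B.carrier → ℕ) (v : B.carrier) : ℕ :=
  if B.HasUniqueCol v then m + 1 else hi v

lemma raiseHi_of_hasUniqueCol {v : B.carrier} (hv : B.HasUniqueCol v) :
    raiseHi B m hi v = m + 1 := if_pos hv

lemma raiseHi_of_not_hasUniqueCol {v : B.carrier} (hv : ¬ B.HasUniqueCol v) :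
    raiseHi B m hi v = hi v := if_neg hv

lemma le_raiseHi (hhi : ∀ v, hi v ≤ m) (v : B.carrier) : hi v ≤ raiseHi B m hi v := by
  by_cases hv : B.HasUniqueCol v
  · rw [raiseHi_of_hasUniqueCol hv]; exact (hhi v).trans (Nat.le_succ m)
  · rw [raiseHi_of_not_hasUniqueCol hv]

lemma raiseHi_le (hhi : ∀ v, hi v ≤ m) (v : B.carrier) : raiseHi B m hi v ≤ m + 1 := by
  by_cases hv : B.HasUniqueCol v
  · rw [raiseHi_of_hasUniqueCol hv]
  · rw [raiseHi_of_not_hasUniqueCol hv]; exact (hhi v).trans (Nat.le_succ m)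

/-- Beyond time `m` only the vertices of a unique colour are alive, and there are at most `k`. -/
theorem card_le_of_raiseHi (hcol : ∀ v, B.col v < k) (hhi : ∀ v, hi v ≤ m)
    (hcard : ∀ j ≤ m, ∀ S : Finset B.carrier, (∀ v ∈ S, lo v ≤ j ∧ j ≤ hi v) → S.card ≤ k)
    (hunique : ∀ v, B.HasUniqueCol v → hi v = m ∨ m < lo v) (j : ℕ) (S : Finset B.carrier)
    (hS : ∀ v ∈ S, lo v ≤ j ∧ j ≤ raiseHi B m hi v) : S.card ≤ k := by
  rcases le_or_gt j m with hj | hj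
  · refine hcard j hj S fun v hv => ⟨(hS v hv).1, ?_⟩
    by_cases hu : B.HasUniqueCol v
    · rcases hunique v hu with h | h
      · omega
      · have := (hS v hv).1; omega
    · simpa [raiseHi_of_not_hasUniqueCol hu] using (hS v hv).2
  · refine card_le_of_hasUniqueCol hcol S fun v hv => ?_
    by_contra hu
    have := (hS v hv).2
    rw [raiseHi_of_not_hasUniqueCol hu] at this
    have := hhi v
    omega

end RaiseHi

/-- `[lo v, hi v]` is the interval of `v` along a derivation branch leading to `w`, whose current
time is `m`. -/
structure IsIntervalCert (k : ℕ) (B : CStruc sigTernary) (w : B.carrier) (m : ℕ)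
    (lo hi : B.carrier → ℕ) : Prop where
  lo_le : ∀ v, lo v ≤ m
  hi_le : ∀ v, hi v ≤ m
  card_le : ∀ j (S : Finset B.carrier), (∀ v ∈ S, lo v ≤ j ∧ j ≤ hi v) → S.card ≤ k
  hi_eq : ∀ v, B.HasUniqueCol v → hi v = m
  linked_left : ∀ u, B.rel () u → u 1 = u 0 → Linked lo hi w (u 0) (u 2)
  linked_right : ∀ u, B.rel () u → u 1 = u 2 → Linked lo hi w (u 2) (u 0)

def HasIntervalCert (k : ℕ) (B : CStruc sigTernary) (w : B.carrier) : Prop :=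
  ∃ m lo hi, IsIntervalCert k B w m lo hi

namespace HasIntervalCert

variable {k : ℕ}

lemma of_subsingleton {B : CStruc sigTernary} (hk : 0 < k) (hsub : ∀ a b : B.carrier, a = b)
    (hrel : ∀ u, ¬ B.rel () u) (w : B.carrier) : HasIntervalCert k B w :=
  ⟨0, fun _ => 0, fun _ => 0, fun _ => le_rfl, fun _ => le_rfl,
    fun _ _ _ => (Finset.card_le_one.2 fun a _ b _ => hsub a b).trans hk,
    fun _ _ => rfl, fun u hu => (hrel u hu).elim, fun u hu => (hrel u hu).elim⟩

lemma transport {B C : CStruc sigTernary} (e : CIso B C) {w : B.carrier}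
    (h : HasIntervalCert k B w) : HasIntervalCert k C (e.toEquiv w) := by
  obtain ⟨m, lo, hi, P⟩ := h
  have hrel : ∀ u, C.rel () u → B.rel () (e.toEquiv.symm ∘ u) := fun u hu =>
    (e.rel_iff () _).2 (by simpa using hu)
  refine ⟨m, lo ∘ e.toEquiv.symm, hi ∘ e.toEquiv.symm, fun v => P.lo_le _, fun v => P.hi_le _,
    fun j S hS => ?_, fun v hv => P.hi_eq _ fun x hx => ?_, fun u hu h => ?_, fun u hu h => ?_⟩
  · rw [← Finset.card_map e.toEquiv.symm.toEmbedding]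
    refine P.card_le j _ fun v hv => ?_
    obtain ⟨x, hx, rfl⟩ := Finset.mem_map.1 hv
    exact hS x hx
  · rw [Equiv.eq_symm_apply]
    exact hv _ (by rw [e.col_eq, hx, ← e.col_eq, Equiv.apply_symm_apply])
  · simpa [Linked, Equiv.symm_apply_eq] using P.linked_left _ (hrel u hu) (by simp [h])
  · simpa [Linked, Equiv.symm_apply_eq] using P.linked_right _ (hrel u hu) (by simp [h])

lemma recolor {A : CStruc sigTernary} {f : ℕ → ℕ} (hf : ∀ i, i < k → f i < k)
    (hcol : ∀ v, A.col v < k) {w : A.carrier} (h : HasIntervalCert k A w) :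
    HasIntervalCert k (A.recolor f) w := by
  obtain ⟨m, lo, hi, P⟩ := h
  have hunique : ∀ v, (A.recolor f).HasUniqueCol v → A.HasUniqueCol v :=
    fun v hv u hu => hv u (congrArg f hu)
  exact ⟨m + 1, lo, raiseHi _ m hi, fun v => (P.lo_le v).trans (Nat.le_succ m),
    raiseHi_le P.hi_le,
    card_le_of_raiseHi (fun v => hf _ (hcol v)) P.hi_le (fun j _ => P.card_le j)
      fun v hv => Or.inl (P.hi_eq v (hunique v hv)),
    fun v => raiseHi_of_hasUniqueCol,
    fun u hu h => (P.linked_left u hu h).mono (le_raiseHi P.hi_le),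
    fun u hu h => (P.linked_right u hu h).mono (le_raiseHi P.hi_le)⟩

lemma introduce {A : CStruc sigTernary} {c : Fin 3 → ℕ}
    (hC : IsPairShaped (A.introduce () c)) {w : A.carrier} (h : HasIntervalCert k A w) :
    HasIntervalCert k (A.introduce () c) w := by
  obtain ⟨m, lo, hi, P⟩ := h
  -- a newly introduced tuple `(a, a, b)` or `(b, a, a)` has `a` of a unique colour, whose
  -- interval therefore reaches the current time `m`
  refine ⟨m, lo, hi, P.lo_le, P.hi_le, P.card_le, P.hi_eq, fun u hu h => ?_, fun u hu h => ?_⟩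
  · rcases (A.introduce_rel_self () c u).1 hu with hu | hu
    · exact P.linked_left u hu h
    · have hm := P.hi_eq _ ((hC.hasUniqueCol_of_introduce hu).1 h)
      exact Or.inl ⟨hm ▸ P.lo_le _, hm ▸ P.lo_le _⟩
  · rcases (A.introduce_rel_self () c u).1 hu with hu | hu
    · exact P.linked_right u hu h
    · have hm := P.hi_eq _ ((hC.hasUniqueCol_of_introduce hu).2 h)
      exact Or.inl ⟨hm ▸ P.lo_le _, hm ▸ P.lo_le _⟩

/-- The vertices of `B` get empty intervals placed after time `m`, except the ones of a unique
colour, whose intervals are the single point `m + 1`. -/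
lemma union_left {A B : CStruc sigTernary} (hA : ∀ v, A.col v < k) (hB : ∀ v, B.col v < k)
    {w : A.carrier} (h : HasIntervalCert k A w) : HasIntervalCert k (A.union B) (Sum.inl w) := by
  obtain ⟨m, lo, hi, P⟩ := h
  let lo' : (A.union B).carrier → ℕ := Sum.elim lo fun _ => m + 1
  let hi' : (A.union B).carrier → ℕ := Sum.elim hi fun _ => 0
  have hhi' : ∀ v, hi' v ≤ m := by rintro (a | b); exacts [P.hi_le a, Nat.zero_le m]
  have hle : ∀ a, hi a ≤ raiseHi _ m hi' (Sum.inl a) := fun a => le_raiseHi hhi' (Sum.inl a)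
  have hcard : ∀ j ≤ m, ∀ S : Finset (A.union B).carrier,
      (∀ v ∈ S, lo' v ≤ j ∧ j ≤ hi' v) → S.card ≤ k := by
    intro j hj S hS
    have hright : S.toRight = ∅ := Finset.eq_empty_of_forall_notMem fun b hb => by
      have := (hS _ (Finset.mem_toRight.1 hb)).1
      simp only [lo', Sum.elim_inr] at this
      omega
    calc S.card = S.toLeft.card + S.toRight.card := Finset.card_toLeft_add_card_toRight.symm
      _ ≤ k := by
        rw [hright, Finset.card_empty, add_zero]
        exact P.card_le j _ fun a ha => hS _ (Finset.mem_toLeft.1 ha)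
  refine ⟨m + 1, lo', raiseHi _ m hi', ?_, raiseHi_le hhi',
    card_le_of_raiseHi (by rintro (a | b); exacts [hA a, hB b]) hhi' hcard ?_,
    fun v => raiseHi_of_hasUniqueCol, ?_, ?_⟩
  · rintro (a | b)
    exacts [(P.lo_le a).trans (Nat.le_succ m), le_rfl]
  · rintro (a | b) hv
    · exact Or.inl (P.hi_eq a fun u hu => Sum.inl_injective (hv (Sum.inl u) hu))
    · exact Or.inr (Nat.lt_succ_self m)
  · rintro u (⟨s, hs, hrel⟩ | ⟨s, hs, -⟩) h
    · obtain rfl : u = Sum.inl ∘ s := funext hs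
      exact (P.linked_left s hrel (Sum.inl_injective h)).map_inl hle
    · exact Or.inr ⟨by simp [lo', hs], by rw [hs]; exact Sum.inr_ne_inl⟩
  · rintro u (⟨s, hs, hrel⟩ | ⟨s, hs, -⟩) h
    · obtain rfl : u = Sum.inl ∘ s := funext hs
      exact (P.linked_right s hrel (Sum.inl_injective h)).map_inl hle
    · exact Or.inr ⟨by simp [lo', hs], by rw [hs]; exact Sum.inr_ne_inl⟩

end HasIntervalCert

theorem UCW.hasIntervalCert {k : ℕ} {B : CStruc sigTernary} (h : UCW sigTernary k B)
    (hB : IsPairShaped B) (w : B.carrier) : HasIntervalCert k B w := by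
  induction h with
  | empty A hA => exact (hA.false w).elim
  | single hk A hsub _ hrel _ => exact .of_subsingleton hk hsub (hrel ()) w
  | @union A B hA hB' ihA ihB =>
    have hA' := hB.comap Sum.inl_injective fun u hu => Or.inl ⟨u, fun _ => rfl, hu⟩
    have hB'' := hB.comap Sum.inr_injective fun u hu => Or.inr ⟨u, fun _ => rfl, hu⟩
    rcases w with a | b
    · exact (ihA hA' a).union_left hA.col_lt_s8 hB'.col_lt_s8
    · exact ((ihB hB'' b).union_left hB'.col_lt_s8 hA.col_lt_s8).transport (CIso.unionComm_s8 B A)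
  | recolor f hf hA ih =>
    exact (ih (hB.comap Function.injective_id fun _ hu => hu) w).recolor hf hA.col_lt_s8
  | introduce R c _ _ ih =>
    cases R
    exact (ih (hB.comap Function.injective_id fun u hu =>
      (CStruc.introduce_rel_self _ _ _ u).2 (Or.inl hu)) w).introduce hB
  | iso e _ ih =>
    simpa using (ih (hB.comap e.toEquiv.injective fun u hu => (e.rel_iff () u).1 hu)
      (e.toEquiv.symm w)).transport e

theorem UCW.exists_isIntervalModel {V : Type} {G : SimpleGraph V} {k : ℕ}
    (h : UCW sigTernary k (prime (CStruc.ofGraph G))) :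
    ∃ lo hi : V → ℕ, IsIntervalModel G k lo hi := by
  obtain ⟨m, lo, hi, P⟩ := h.hasIntervalCert (isPairShaped_prime _)
    (Sum.inr () : (prime (CStruc.ofGraph G)).carrier)
  have hle : ∀ v, lo (Sum.inl v) ≤ hi (Sum.inl v) := fun v => by
    rcases P.linked_right _ (prime_ofGraph_rel_apex v) rfl with ⟨h, -⟩ | ⟨-, h⟩
    exacts [h, absurd rfl h]
  refine ⟨fun v => lo (Sum.inl v), fun v => hi (Sum.inl v), hle, fun u v huv => ?_,
    fun j S hS => ?_⟩
  · rcases P.linked_left _ (prime_ofGraph_rel_of_adj huv.symm) rfl with ⟨-, h⟩ | ⟨h, -⟩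
    exacts [h, h ▸ hle v]
  · rw [← Finset.card_map ⟨Sum.inl, Sum.inl_injective⟩]
    refine P.card_le j _ fun v hv => ?_
    obtain ⟨x, hx, rfl⟩ := Finset.mem_map.1 hv
    exact hS x hx

/-- for every n there is a finite structure A with a single
ternary relation symbol such that tw(G_A) = 2 and ucw(A) > n. -/
theorem stmt8 (n : ℕ) :
    ∃ A : CStruc sigTernary, Finite A.carrier ∧ (∀ a, A.col a = 0) ∧
      tw A.gaifman = 2 ∧ n < ucw A := by
  refine ⟨prime (CStruc.ofGraph (ternaryTree (n + 1))), inferInstance, fun _ => rfl, ?_, ?_⟩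
  · rw [gaifman_prime_ofGraph]
    exact tw_eq_of_twLe_of_not_twLe (twLe_apexGraph twLe_ternaryTree_one)
      (not_twLe_apexGraph_one (branch_root_adj_root 0))
  · refine Nat.lt_of_succ_le (le_csInf ⟨_, UCW.of_finite _ fun _ => rfl⟩ fun k hk => ?_)
    obtain ⟨lo, hi, hm⟩ := UCW.exists_isIntervalModel hk
    have := succ_le_of_isIntervalModel hm
    omega
end
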